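/- arXiv:0802.3889 — 5 statements merged into one kernel-verified Lean document; each statement's English description precedes it below -/
import Mathlib

section
/- Let Δ₁ ⊆ ℝ^{n₁} and Δ₂ ⊆ ℝ^{n₂} be convex polytopes each containing the origin, and Δ = Δ₁ ⊕ Δ₂ their direct sum. Every face of Δ not containing the origin equals σ₁ ⊕ σ₂ for some (possibly empty) faces σ₁ of Δ₁ and σ₂ of Δ₂ not containing the origin. -/
open Set

/-- A (convex) polytope: the convex hull of a finite set of points. -/
def IsPolytope {V : Type*} [AddCommGroup V] [Module ℝ V] (P : Set V) : Prop :=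
  ∃ s : Finset V, P = convexHull ℝ (s : Set V)

/-- A face of `P`: the intersection of `P` with a supporting hyperplane,
together with `P` itself and the empty set. -/
def IsFaceOf {V : Type*} [AddCommGroup V] [Module ℝ V] (σ P : Set V) : Prop :=
  σ = P ∨ σ = ∅ ∨
    ∃ (l : V →ₗ[ℝ] ℝ) (c : ℝ), l ≠ 0 ∧ (∀ x ∈ P, l x ≤ c) ∧ σ = {x ∈ P | l x = c}

/-- The direct sum of `A ⊆ ℝ^{n₁}` and `B ⊆ ℝ^{n₂}`: the convex hull of
`(A × {0}) ∪ ({0} × B)` in `ℝ^{n₁+n₂}`. -/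
def dSum {n₁ n₂ : ℕ} (A : Set (Fin n₁ → ℝ)) (B : Set (Fin n₂ → ℝ)) :
    Set ((Fin n₁ → ℝ) × (Fin n₂ → ℝ)) :=
  convexHull ℝ ((fun x => (x, 0)) '' A ∪ (fun y => ((0 : Fin n₁ → ℝ), y)) '' B)

lemma mem_hull_face {V : Type*} [AddCommGroup V] [Module ℝ V] (S : Set V)
    (l : V →ₗ[ℝ] ℝ) (c : ℝ) (hS : ∀ p ∈ S, l p ≤ c) {z : V}
    (hz : z ∈ convexHull ℝ S) (hlz : l z = c) :
    z ∈ convexHull ℝ {p ∈ S | l p = c} := by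
  rw [convexHull_eq] at hz
  obtain ⟨ι, t, w, f, hw, hw1, hf, hcm⟩ := hz
  have hz' : z = ∑ i ∈ t, w i • f i := by
    rw [← hcm, Finset.centerMass_eq_of_sum_1 _ _ hw1]
  have hlsum : ∑ i ∈ t, w i * l (f i) = c := by
    rw [← hlz, hz', map_sum]
    simp [smul_eq_mul]
  have hsum0 : ∑ i ∈ t, w i * (c - l (f i)) = 0 := by
    have : ∑ i ∈ t, w i * (c - l (f i)) = (∑ i ∈ t, w i) * c - ∑ i ∈ t, w i * l (f i) := by
      rw [Finset.sum_mul, ← Finset.sum_sub_distrib]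
      exact Finset.sum_congr rfl fun i _ => by ring
    rw [this, hw1, hlsum]; ring
  have key : ∀ i ∈ t, w i ≠ 0 → l (f i) = c := by
    intro i hi hwi
    have := (Finset.sum_eq_zero_iff_of_nonneg (fun i hi =>
      mul_nonneg (hw i hi) (sub_nonneg.2 (hS (f i) (hf i hi))))).1 hsum0 i hi
    rcases mul_eq_zero.1 this with h | h
    · exact absurd h hwi
    · linarith [sub_eq_zero.1 h]
  have hzc : z = (t.filter (fun i => w i ≠ 0)).centerMass w f := by
    rw [← hcm, Finset.centerMass_filter_ne_zero]
  rw [hzc]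
  apply Finset.centerMass_mem_convexHull
  · intro i hi; exact hw i (Finset.mem_filter.1 hi).1
  · rw [Finset.sum_filter_ne_zero, hw1]; norm_num
  · intro i hi
    obtain ⟨hit, hwi⟩ := Finset.mem_filter.1 hi
    exact ⟨hf i hit, key i hit hwi⟩

theorem stmt1 {n₁ n₂ : ℕ} (Δ₁ : Set (Fin n₁ → ℝ)) (Δ₂ : Set (Fin n₂ → ℝ))
    (σ : Set ((Fin n₁ → ℝ) × (Fin n₂ → ℝ)))
    (h₁ : IsPolytope Δ₁) (h₂ : IsPolytope Δ₂)
    (h0₁ : (0 : Fin n₁ → ℝ) ∈ Δ₁) (h0₂ : (0 : Fin n₂ → ℝ) ∈ Δ₂)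
    (hf : IsFaceOf σ (dSum Δ₁ Δ₂))
    (hn : (0 : (Fin n₁ → ℝ) × (Fin n₂ → ℝ)) ∉ σ) :
    ∃ (σ₁ : Set (Fin n₁ → ℝ)) (σ₂ : Set (Fin n₂ → ℝ)),
      IsFaceOf σ₁ Δ₁ ∧ (0 : Fin n₁ → ℝ) ∉ σ₁ ∧
      IsFaceOf σ₂ Δ₂ ∧ (0 : Fin n₂ → ℝ) ∉ σ₂ ∧
      σ = dSum σ₁ σ₂ := by
  -- the generating set of the direct sum
  set S : Set ((Fin n₁ → ℝ) × (Fin n₂ → ℝ)) :=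
    (fun x => (x, 0)) '' Δ₁ ∪ (fun y => ((0 : Fin n₁ → ℝ), y)) '' Δ₂ with hS
  have h00 : (0 : (Fin n₁ → ℝ) × (Fin n₂ → ℝ)) ∈ dSum Δ₁ Δ₂ := by
    apply subset_convexHull ℝ _
    exact Or.inl ⟨0, h0₁, rfl⟩
  rcases hf with h | h | ⟨l, c, hl0, hle, hσ⟩
  · exact absurd (h ▸ h00) hn
  · refine ⟨∅, ∅, Or.inr (Or.inl rfl), notMem_empty _, Or.inr (Or.inl rfl),
      notMem_empty _, ?_⟩
    rw [h, dSum]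
    simp
  · -- c is positive
    have hc0 : (0:ℝ) ≤ c := by simpa using hle 0 h00
    have hcne : c ≠ 0 := by
      intro hc
      exact hn (hσ ▸ ⟨h00, by simp [hc]⟩)
    set l₁ : (Fin n₁ → ℝ) →ₗ[ℝ] ℝ := l.comp (LinearMap.inl ℝ _ _) with hl₁
    set l₂ : (Fin n₂ → ℝ) →ₗ[ℝ] ℝ := l.comp (LinearMap.inr ℝ _ _) with hl₂
    set σ₁ : Set (Fin n₁ → ℝ) := {x ∈ Δ₁ | l₁ x = c} with hσ₁
    set σ₂ : Set (Fin n₂ → ℝ) := {y ∈ Δ₂ | l₂ y = c} with hσ₂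
    have hle₁ : ∀ x ∈ Δ₁, l₁ x ≤ c := fun x hx =>
      hle (x, 0) (subset_convexHull ℝ _ (Or.inl ⟨x, hx, rfl⟩))
    have hle₂ : ∀ y ∈ Δ₂, l₂ y ≤ c := fun y hy =>
      hle (0, y) (subset_convexHull ℝ _ (Or.inr ⟨y, hy, rfl⟩))
    have hface₁ : IsFaceOf σ₁ Δ₁ := by
      by_cases h : l₁ = 0
      · refine Or.inr (Or.inl ?_)
        rw [hσ₁, h]
        ext x; simp [Ne.symm hcne]
      · exact Or.inr (Or.inr ⟨l₁, c, h, hle₁, rfl⟩)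
    have hface₂ : IsFaceOf σ₂ Δ₂ := by
      by_cases h : l₂ = 0
      · refine Or.inr (Or.inl ?_)
        rw [hσ₂, h]
        ext y; simp [Ne.symm hcne]
      · exact Or.inr (Or.inr ⟨l₂, c, h, hle₂, rfl⟩)
    refine ⟨σ₁, σ₂, hface₁, ?_, hface₂, ?_, ?_⟩
    · intro h; exact hcne (by simpa using h.2.symm)
    · intro h; exact hcne (by simpa using h.2.symm)
    · -- σ = dSum σ₁ σ₂
      apply Subset.antisymm
      · -- forward inclusion
        rintro z hz
        rw [hσ] at hz
        obtain ⟨hzΔ, hzc⟩ := hz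
        have hmem := mem_hull_face S l c ?_ hzΔ hzc
        · refine convexHull_mono ?_ hmem
          rintro p ⟨hpS, hpc⟩
          rcases hpS with ⟨x, hx, rfl⟩ | ⟨y, hy, rfl⟩
          · exact Or.inl ⟨x, ⟨hx, hpc⟩, rfl⟩
          · exact Or.inr ⟨y, ⟨hy, hpc⟩, rfl⟩
        · rintro p (⟨x, hx, rfl⟩ | ⟨y, hy, rfl⟩)
          · exact hle₁ x hx
          · exact hle₂ y hy
      · -- reverse inclusion
        have hconv : Convex ℝ σ := by
          rw [hσ]
          exact (convex_convexHull ℝ S).inter (convex_hyperplane l.isLinear c)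
        apply convexHull_min _ hconv
        rintro p (⟨x, ⟨hx, hxc⟩, rfl⟩ | ⟨y, ⟨hy, hyc⟩, rfl⟩)
        · exact hσ ▸ ⟨subset_convexHull ℝ _ (Or.inl ⟨x, hx, rfl⟩), hxc⟩
        · exact hσ ▸ ⟨subset_convexHull ℝ _ (Or.inr ⟨y, hy, rfl⟩), hyc⟩
end

section
/- Let Δ₁ ⊆ ℝ^{n₁} and Δ₂ ⊆ ℝ^{n₂} be convex polytopes containing the origin, σ₁ a face of Δ₁ of dimension d₁ not containing the origin, and σ₂ a face of Δ₂ of dimension d₂ not containing the origin. Then the face σ₁ ⊕ σ₂ of Δ₁ ⊕ Δ₂ has dimension d₁ + d₂ + 1. -/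
open Set

/-- The dimension of a set: the dimension of its affine span, i.e. the
rank of the direction (vector span) of the affine span. -/
noncomputable def setDim {V : Type*} [AddCommGroup V] [Module ℝ V] (s : Set V) : ℕ :=
  Module.finrank ℝ (vectorSpan ℝ s)

lemma face_notMem_vectorSpan {V : Type*} [AddCommGroup V] [Module ℝ V] {σ P : Set V}
    (hf : IsFaceOf σ P) (h0 : (0:V) ∈ P) (hn : (0:V) ∉ σ) (hne : σ.Nonempty)
    {a : V} (ha : a ∈ σ) : a ∉ vectorSpan ℝ σ := by
  rcases hf with rfl | rfl | ⟨l, c, hl, hle, hσ⟩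
  · exact absurd h0 hn
  · exact absurd hne (by simp)
  have hc : c ≠ 0 := by
    rintro rfl
    exact hn (hσ ▸ ⟨h0, by simp⟩)
  have hker : vectorSpan ℝ σ ≤ LinearMap.ker l := by
    rw [vectorSpan_def, Submodule.span_le]
    rintro v ⟨x, hx, y, hy, rfl⟩
    rw [hσ] at hx hy
    simp [LinearMap.mem_ker, vsub_eq_sub, hx.2, hy.2]
  intro hmem
  have h1 : l a = 0 := hker hmem
  rw [hσ] at ha
  exact hc (ha.2 ▸ h1)

theorem stmt2 {n₁ n₂ : ℕ} (Δ₁ σ₁ : Set (Fin n₁ → ℝ)) (Δ₂ σ₂ : Set (Fin n₂ → ℝ))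
    (d₁ d₂ : ℕ)
    (h₁ : IsPolytope Δ₁) (h₂ : IsPolytope Δ₂)
    (h0₁ : (0 : Fin n₁ → ℝ) ∈ Δ₁) (h0₂ : (0 : Fin n₂ → ℝ) ∈ Δ₂)
    (hf₁ : IsFaceOf σ₁ Δ₁) (hn₁ : (0 : Fin n₁ → ℝ) ∉ σ₁) (hne₁ : σ₁.Nonempty)
    (hd₁ : setDim σ₁ = d₁)
    (hf₂ : IsFaceOf σ₂ Δ₂) (hn₂ : (0 : Fin n₂ → ℝ) ∉ σ₂) (hne₂ : σ₂.Nonempty)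
    (hd₂ : setDim σ₂ = d₂) :
    setDim (dSum σ₁ σ₂) = d₁ + d₂ + 1 := by
  classical
  obtain ⟨a, ha⟩ := hne₁
  obtain ⟨b, hb⟩ := hne₂
  have haV : a ∉ vectorSpan ℝ σ₁ := face_notMem_vectorSpan hf₁ h0₁ hn₁ ⟨a, ha⟩ ha
  have hbV : b ∉ vectorSpan ℝ σ₂ := face_notMem_vectorSpan hf₂ h0₂ hn₂ ⟨b, hb⟩ hb
  have ha0 : a ≠ 0 := fun h => haV (h ▸ (vectorSpan ℝ σ₁).zero_mem)
  set S : Set ((Fin n₁ → ℝ) × (Fin n₂ → ℝ)) :=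
    (fun x => (x, (0 : Fin n₂ → ℝ))) '' σ₁ ∪ (fun y => ((0 : Fin n₁ → ℝ), y)) '' σ₂ with hS
  have hvs : vectorSpan ℝ (dSum σ₁ σ₂) = vectorSpan ℝ S := by
    rw [dSum, ← direction_affineSpan, ← direction_affineSpan ℝ S, affineSpan_convexHull]
  set M₁ : Submodule ℝ ((Fin n₁ → ℝ) × (Fin n₂ → ℝ)) :=
    Submodule.map (LinearMap.inl ℝ (Fin n₁ → ℝ) (Fin n₂ → ℝ)) (vectorSpan ℝ σ₁) with hM₁
  set M₂ : Submodule ℝ ((Fin n₁ → ℝ) × (Fin n₂ → ℝ)) :=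
    Submodule.map (LinearMap.inr ℝ (Fin n₁ → ℝ) (Fin n₂ → ℝ)) (vectorSpan ℝ σ₂) with hM₂
  set v : ((Fin n₁ → ℝ) × (Fin n₂ → ℝ)) := (a, -b) with hv
  -- memberships
  have hmemS₁ : ∀ x ∈ σ₁, ((x, (0 : Fin n₂ → ℝ)) : ((Fin n₁ → ℝ) × (Fin n₂ → ℝ))) ∈ S := fun x hx =>
    Or.inl ⟨x, hx, rfl⟩
  have hmemS₂ : ∀ y ∈ σ₂, (((0 : Fin n₁ → ℝ), y) : ((Fin n₁ → ℝ) × (Fin n₂ → ℝ))) ∈ S := fun y hy =>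
    Or.inr ⟨y, hy, rfl⟩
  have hmain : vectorSpan ℝ S = (M₁ ⊔ M₂) ⊔ (ℝ ∙ v) := by
    apply le_antisymm
    · rw [vectorSpan_def, Submodule.span_le]
      rintro w ⟨p, hp, q, hq, rfl⟩
      have key : ∀ x ∈ σ₁, ∀ y ∈ σ₂,
          ((x, (0:Fin n₂ → ℝ)) : ((Fin n₁ → ℝ) × (Fin n₂ → ℝ))) -ᵥ (((0:Fin n₁ → ℝ), y) : ((Fin n₁ → ℝ) × (Fin n₂ → ℝ))) ∈ (M₁ ⊔ M₂) ⊔ (ℝ ∙ v) := by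
        intro x hx y hy
        have h1 : ((x - a, (0:Fin n₂ → ℝ)) : ((Fin n₁ → ℝ) × (Fin n₂ → ℝ))) ∈ M₁ :=
          ⟨x - a, vsub_mem_vectorSpan ℝ hx ha, rfl⟩
        have h2 : (((0:Fin n₁ → ℝ), b - y) : ((Fin n₁ → ℝ) × (Fin n₂ → ℝ))) ∈ M₂ :=
          ⟨b - y, vsub_mem_vectorSpan ℝ hb hy, rfl⟩
        have h3 : v ∈ (ℝ ∙ v) := Submodule.mem_span_singleton_self v
        have heq : ((x, (0:Fin n₂ → ℝ)) : ((Fin n₁ → ℝ) × (Fin n₂ → ℝ))) -ᵥ (((0:Fin n₁ → ℝ), y) : ((Fin n₁ → ℝ) × (Fin n₂ → ℝ)))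
            = ((x - a, (0:Fin n₂ → ℝ)) : ((Fin n₁ → ℝ) × (Fin n₂ → ℝ))) + (((0:Fin n₁ → ℝ), b - y) : ((Fin n₁ → ℝ) × (Fin n₂ → ℝ))) + v := by
          simp only [hv, vsub_eq_sub, Prod.mk_sub_mk, Prod.mk_add_mk, Prod.mk.injEq]
          constructor <;> abel
        rw [heq]
        exact add_mem (add_mem (Submodule.mem_sup_left (Submodule.mem_sup_left h1)) (Submodule.mem_sup_left (Submodule.mem_sup_right h2)))
          (Submodule.mem_sup_right h3)
      rcases hp with ⟨x, hx, rfl⟩ | ⟨y, hy, rfl⟩ <;> rcases hq with ⟨x', hx', rfl⟩ | ⟨y', hy', rfl⟩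
      · refine Submodule.mem_sup_left (Submodule.mem_sup_left ?_)
        exact ⟨x - x', vsub_mem_vectorSpan ℝ hx hx', by simp [vsub_eq_sub]⟩
      · exact key x hx y' hy'
      · have := neg_mem (key x' hx' y hy)
        simpa [vsub_eq_sub, neg_sub] using this
      · refine Submodule.mem_sup_left (Submodule.mem_sup_right ?_)
        exact ⟨y - y', vsub_mem_vectorSpan ℝ hy hy', by simp [vsub_eq_sub]⟩
    · refine sup_le (sup_le ?_ ?_) ?_
      · rw [hM₁, vectorSpan_def, Submodule.map_span, Submodule.span_le]
        rintro w ⟨u, ⟨x, hx, y, hy, rfl⟩, rfl⟩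
        have : (LinearMap.inl ℝ (Fin n₁ → ℝ) (Fin n₂ → ℝ)) (x -ᵥ y)
            = ((x, (0:Fin n₂ → ℝ)) : ((Fin n₁ → ℝ) × (Fin n₂ → ℝ))) -ᵥ (((y, (0:Fin n₂ → ℝ))) : ((Fin n₁ → ℝ) × (Fin n₂ → ℝ))) := by
          simp [vsub_eq_sub, Prod.mk_sub_mk]
        rw [this]
        exact vsub_mem_vectorSpan ℝ (hmemS₁ x hx) (hmemS₁ y hy)
      · rw [hM₂, vectorSpan_def, Submodule.map_span, Submodule.span_le]
        rintro w ⟨u, ⟨x, hx, y, hy, rfl⟩, rfl⟩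
        have : (LinearMap.inr ℝ (Fin n₁ → ℝ) (Fin n₂ → ℝ)) (x -ᵥ y)
            = (((0:Fin n₁ → ℝ), x) : ((Fin n₁ → ℝ) × (Fin n₂ → ℝ))) -ᵥ ((((0:Fin n₁ → ℝ), y)) : ((Fin n₁ → ℝ) × (Fin n₂ → ℝ))) := by
          simp [vsub_eq_sub, Prod.mk_sub_mk]
        rw [this]
        exact vsub_mem_vectorSpan ℝ (hmemS₂ x hx) (hmemS₂ y hy)
      · rw [Submodule.span_singleton_le_iff_mem]
        have : v = ((a, (0:Fin n₂ → ℝ)) : ((Fin n₁ → ℝ) × (Fin n₂ → ℝ))) -ᵥ (((0:Fin n₁ → ℝ), b) : ((Fin n₁ → ℝ) × (Fin n₂ → ℝ))) := by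
          simp [hv, vsub_eq_sub, Prod.mk_sub_mk]
        rw [this]
        exact vsub_mem_vectorSpan ℝ (hmemS₁ a ha) (hmemS₂ b hb)
  -- dimension count
  have hsub : M₁ ⊔ M₂ ≤ (vectorSpan ℝ σ₁).prod (vectorSpan ℝ σ₂) := by
    refine sup_le ?_ ?_
    · rintro w ⟨x, hx, rfl⟩
      exact ⟨hx, Submodule.zero_mem _⟩
    · rintro w ⟨y, hy, rfl⟩
      exact ⟨Submodule.zero_mem _, hy⟩
  have hvnot : v ∉ M₁ ⊔ M₂ := fun h => haV (hsub h).1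
  have hv0 : v ≠ 0 := fun h => ha0 (congrArg Prod.fst h)
  have hdisj : Disjoint (M₁ ⊔ M₂) (ℝ ∙ v) :=
    (Submodule.disjoint_span_singleton' hv0).mpr hvnot
  have hdisj12 : Disjoint M₁ M₂ := by
    rw [Submodule.disjoint_def]
    rintro w ⟨x, hx, rfl⟩ ⟨y, hy, hyw⟩
    have h1 : x = 0 := by
      have := congrArg Prod.fst hyw
      simpa using this.symm
    simp [h1]
  have e₁ := (Submodule.equivMapOfInjective (LinearMap.inl ℝ (Fin n₁ → ℝ) (Fin n₂ → ℝ))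
    LinearMap.inl_injective (vectorSpan ℝ σ₁)).finrank_eq
  have e₂ := (Submodule.equivMapOfInjective (LinearMap.inr ℝ (Fin n₁ → ℝ) (Fin n₂ → ℝ))
    LinearMap.inr_injective (vectorSpan ℝ σ₂)).finrank_eq
  have f1 : Module.finrank ℝ (M₁ ⊔ M₂ : Submodule ℝ ((Fin n₁ → ℝ) × (Fin n₂ → ℝ)))
      = d₁ + d₂ := by
    have := Submodule.finrank_sup_add_finrank_inf_eq M₁ M₂
    rw [hdisj12.eq_bot] at this
    simp only [finrank_bot, add_zero] at this
    rw [this, ← e₁, ← e₂]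
    rw [setDim] at hd₁ hd₂
    omega
  have f2 : Module.finrank ℝ ((M₁ ⊔ M₂) ⊔ (ℝ ∙ v) : Submodule ℝ ((Fin n₁ → ℝ) × (Fin n₂ → ℝ))) = d₁ + d₂ + 1 := by
    have := Submodule.finrank_sup_add_finrank_inf_eq (M₁ ⊔ M₂) (ℝ ∙ v)
    rw [hdisj.eq_bot] at this
    simp only [finrank_bot, add_zero] at this
    rw [this, f1, finrank_span_singleton hv0]
  rw [setDim, hvs, hmain, f2]
end

section
/- Let Δ₁ ⊆ ℝ^{n₁} and Δ₂ ⊆ ℝ^{n₂} be full-dimensional convex polytopes containing the origin, and Δ = Δ₁ ⊕ Δ₂. For u = (u₁, u₂) ∈ C(Δ) with u_i ∈ C(Δ_i), the weight satisfies w_Δ(u) = w_{Δ₁}(u₁) + w_{Δ₂}(u₂). -/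
open Set

open Pointwise

/-- The cone over a set: `C(S) = { ρ • x : ρ ≥ 0, x ∈ S }`. -/
def rcone {V : Type*} [AddCommGroup V] [Module ℝ V] (S : Set V) : Set V :=
  {x | ∃ ρ : ℝ, 0 ≤ ρ ∧ ∃ s ∈ S, x = ρ • s}

/-- The weight of `u` with respect to `Δ`: `w_Δ(u) = inf { ρ ≥ 0 : u ∈ ρ Δ }`. -/
noncomputable def wt {V : Type*} [AddCommGroup V] [Module ℝ V] (Δ : Set V) (u : V) : ℝ :=
  sInf {ρ : ℝ | 0 ≤ ρ ∧ u ∈ ρ • Δ}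


/-!
For compact `Δ` the infimum defining `w_Δ(u)` is attained. Every point of `Δ₁ ⊕ Δ₂` is a convex
combination `λ (x, 0) + μ (0, y)` with `x ∈ Δ₁`, `y ∈ Δ₂`, so `u ∈ ρ (Δ₁ ⊕ Δ₂)` forces
`u₁ ∈ ρλ Δ₁` and `u₂ ∈ ρμ Δ₂`, whence `w₁ + w₂ ≤ ρ`. Conversely, `Δ₁ ⊕ Δ₂` is convex, so
`(w₁ + w₂) (Δ₁ ⊕ Δ₂) = w₁ (Δ₁ ⊕ Δ₂) + w₂ (Δ₁ ⊕ Δ₂)` contains `(u₁, 0) + (0, u₂)`.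
-/

section Weight

variable {V : Type*} [AddCommGroup V] [Module ℝ V]

lemma wt_nonneg (Δ : Set V) (u : V) : 0 ≤ wt Δ u :=
  Real.sInf_nonneg fun _ hρ => hρ.1

lemma wt_le_of_mem_smul {Δ : Set V} {u : V} {ρ : ℝ} (hρ : 0 ≤ ρ) (hu : u ∈ ρ • Δ) :
    wt Δ u ≤ ρ :=
  csInf_le ⟨0, fun _ h => h.1⟩ ⟨hρ, hu⟩

variable [TopologicalSpace V] [T2Space V] [ContinuousSMul ℝ V]

lemma IsCompact.isClosed_setOf_mem_smul {Δ : Set V} (hΔ : IsCompact Δ) (u : V) :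
    IsClosed {ρ : ℝ | 0 ≤ ρ ∧ u ∈ ρ • Δ} := by
  have := isCompact_iff_compactSpace.mp hΔ
  have hK : IsClosed {p : ℝ × Δ | 0 ≤ p.1 ∧ p.1 • (p.2 : V) = u} :=
    (isClosed_le continuous_const continuous_fst).inter
      (isClosed_eq (continuous_fst.smul (continuous_subtype_val.comp continuous_snd))
        continuous_const)
  convert isClosedMap_fst_of_compactSpace _ hK using 1
  ext ρ
  simp [Set.mem_smul_set, and_comm]

lemma IsCompact.mem_wt_smul {Δ : Set V} (hΔ : IsCompact Δ) {u : V} (hu : u ∈ rcone Δ) :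
    u ∈ wt Δ u • Δ := by
  obtain ⟨ρ, hρ, d, hd, rfl⟩ := hu
  exact ((hΔ.isClosed_setOf_mem_smul _).csInf_mem ⟨ρ, hρ, d, hd, rfl⟩
    ⟨0, fun _ h => h.1⟩).2

end Weight

section DirectSum

variable {E F : Type*} [AddCommGroup E] [Module ℝ E] [AddCommGroup F] [Module ℝ F]

def convexDirectSum (A : Set E) (B : Set F) : Set (E × F) :=
  convexHull ℝ ((fun x => (x, 0)) '' A ∪ (fun y => (0, y)) '' B)

lemma convexDirectSum_eq_convexJoin {A : Set E} {B : Set F} (hA : Convex ℝ A) (hB : Convex ℝ B)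
    (hA₀ : A.Nonempty) (hB₀ : B.Nonempty) :
    convexDirectSum A B = convexJoin ℝ ((fun x => (x, 0)) '' A) ((fun y => (0, y)) '' B) :=
  (hA.linear_image (LinearMap.inl ℝ E F)).convexHull_union (hB.linear_image (LinearMap.inr ℝ E F))
    (hA₀.image _) (hB₀.image _)

lemma convex_convexDirectSum (A : Set E) (B : Set F) : Convex ℝ (convexDirectSum A B) :=
  convex_convexHull ℝ _

lemma mem_add_smul_convexDirectSum {A : Set E} {B : Set F} {u₁ : E} {u₂ : F} {a b : ℝ}
    (ha : 0 ≤ a) (hb : 0 ≤ b) (h₁ : u₁ ∈ a • A) (h₂ : u₂ ∈ b • B) :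
    (u₁, u₂) ∈ (a + b) • convexDirectSum A B := by
  rw [(convex_convexDirectSum A B).add_smul ha hb]
  obtain ⟨x, hx, rfl⟩ := h₁
  obtain ⟨y, hy, rfl⟩ := h₂
  have hx' : (x, (0 : F)) ∈ convexDirectSum A B := subset_convexHull ℝ _ (.inl ⟨x, hx, rfl⟩)
  have hy' : ((0 : E), y) ∈ convexDirectSum A B := subset_convexHull ℝ _ (.inr ⟨y, hy, rfl⟩)
  convert Set.add_mem_add (Set.smul_mem_smul_set (a := a) hx')
    (Set.smul_mem_smul_set (a := b) hy') using 1
  ext <;> simp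

lemma add_wt_le_of_mem_smul_convexDirectSum {A : Set E} {B : Set F} (hA : Convex ℝ A)
    (hB : Convex ℝ B) (hA₀ : A.Nonempty) (hB₀ : B.Nonempty) {u₁ : E} {u₂ : F} {ρ : ℝ}
    (hρ : 0 ≤ ρ) (hu : (u₁, u₂) ∈ ρ • convexDirectSum A B) :
    wt A u₁ + wt B u₂ ≤ ρ := by
  obtain ⟨z, hz, hzu⟩ := hu
  rw [convexDirectSum_eq_convexJoin hA hB hA₀ hB₀, mem_convexJoin] at hz
  obtain ⟨_, ⟨x, hx, rfl⟩, _, ⟨y, hy, rfl⟩, s, t, hs, ht, hst, rfl⟩ := hz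
  simp only [Prod.smul_mk, smul_zero, Prod.mk_add_mk, add_zero, zero_add,
    Prod.mk.injEq, smul_smul] at hzu
  have h₁ : wt A u₁ ≤ ρ * s := wt_le_of_mem_smul (by positivity) ⟨x, hx, hzu.1⟩
  have h₂ : wt B u₂ ≤ ρ * t := wt_le_of_mem_smul (by positivity) ⟨y, hy, hzu.2⟩
  calc wt A u₁ + wt B u₂ ≤ ρ * s + ρ * t := add_le_add h₁ h₂
    _ = ρ := by rw [← mul_add, hst, mul_one]

end DirectSum

section Polytope

variable {V : Type*} [AddCommGroup V] [Module ℝ V]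

lemma IsPolytope.convex {P : Set V} (hP : IsPolytope P) : Convex ℝ P := by
  obtain ⟨s, rfl⟩ := hP
  exact convex_convexHull ℝ _

lemma IsPolytope.isCompact [TopologicalSpace V] [IsTopologicalAddGroup V] [ContinuousSMul ℝ V]
    {P : Set V} (hP : IsPolytope P) : IsCompact P := by
  obtain ⟨s, rfl⟩ := hP
  exact s.finite_toSet.isCompact_convexHull ℝ

end Polytope

theorem wt_convexDirectSum {E F : Type*} [AddCommGroup E] [Module ℝ E] [TopologicalSpace E]
    [T2Space E] [ContinuousSMul ℝ E] [AddCommGroup F] [Module ℝ F] [TopologicalSpace F]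
    [T2Space F] [ContinuousSMul ℝ F] {A : Set E} {B : Set F} (hA : Convex ℝ A) (hB : Convex ℝ B)
    (hAc : IsCompact A) (hBc : IsCompact B) {u₁ : E} {u₂ : F} (hu₁ : u₁ ∈ rcone A)
    (hu₂ : u₂ ∈ rcone B) :
    wt (convexDirectSum A B) (u₁, u₂) = wt A u₁ + wt B u₂ := by
  have hmem : (u₁, u₂) ∈ (wt A u₁ + wt B u₂) • convexDirectSum A B :=
    mem_add_smul_convexDirectSum (wt_nonneg _ _) (wt_nonneg _ _)
      (hAc.mem_wt_smul hu₁) (hBc.mem_wt_smul hu₂)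
  refine IsLeast.csInf_eq ⟨⟨add_nonneg (wt_nonneg _ _) (wt_nonneg _ _), hmem⟩, ?_⟩
  rintro ρ ⟨hρ, hu⟩
  exact add_wt_le_of_mem_smul_convexDirectSum hA hB
    (Set.smul_set_nonempty.mp ⟨_, hAc.mem_wt_smul hu₁⟩)
    (Set.smul_set_nonempty.mp ⟨_, hBc.mem_wt_smul hu₂⟩) hρ hu

theorem stmt5_general {n₁ n₂ : ℕ} (Δ₁ : Set (Fin n₁ → ℝ)) (Δ₂ : Set (Fin n₂ → ℝ))
    (h₁ : IsPolytope Δ₁) (h₂ : IsPolytope Δ₂)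
    (u₁ : Fin n₁ → ℝ) (u₂ : Fin n₂ → ℝ)
    (hu₁ : u₁ ∈ rcone Δ₁) (hu₂ : u₂ ∈ rcone Δ₂) :
    wt (dSum Δ₁ Δ₂) (u₁, u₂) = wt Δ₁ u₁ + wt Δ₂ u₂ :=
  wt_convexDirectSum h₁.convex h₂.convex h₁.isCompact h₂.isCompact hu₁ hu₂

theorem stmt5 {n₁ n₂ : ℕ} (Δ₁ : Set (Fin n₁ → ℝ)) (Δ₂ : Set (Fin n₂ → ℝ))
    (h₁ : IsPolytope Δ₁) (h₂ : IsPolytope Δ₂)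
    (h0₁ : (0 : Fin n₁ → ℝ) ∈ Δ₁) (h0₂ : (0 : Fin n₂ → ℝ) ∈ Δ₂)
    (hfull₁ : affineSpan ℝ Δ₁ = ⊤) (hfull₂ : affineSpan ℝ Δ₂ = ⊤)
    (u₁ : Fin n₁ → ℝ) (u₂ : Fin n₂ → ℝ)
    (hu₁ : u₁ ∈ rcone Δ₁) (hu₂ : u₂ ∈ rcone Δ₂)
    (hu : (u₁, u₂) ∈ rcone (dSum Δ₁ Δ₂)) :
    wt (dSum Δ₁ Δ₂) (u₁, u₂) = wt Δ₁ u₁ + wt Δ₂ u₂ :=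
  stmt5_general Δ₁ Δ₂ h₁ h₂ u₁ u₂ hu₁ hu₂
end

section
/- Let (f₁,…,f_n) be a basis of a subgroup N of ℤ^n with 2ℤ^n ⊆ N, let M be the matrix with columns f_i, and let E ⊆ {0,1}^n be the set of ε such that Mε ∈ 2ℤ^n. Then the set of lattice points of ℤ^n contained in the half-open fundamental parallelotope { Σ_i x_i f_i : 0 ≤ x_i < 1 } is exactly { (1/2) Σ_i ε_i f_i : ε ∈ E }, and this set has cardinality |det M| = 2^{k₀} where 2^{k₀} = [ℤ^n : N]. -/
open scoped BigOperators

/-- `E`: the subset of `{0,1}^n` of vectors `ε` with `Mε ∈ 2ℤ^n` (the lift of the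
kernel of `M mod 2` on `𝔽₂^n`). -/
def Eset {n : ℕ} (M : Matrix (Fin n) (Fin n) ℤ) : Set (Fin n → ℤ) :=
  {ε | (∀ i, ε i = 0 ∨ ε i = 1) ∧ ∀ j, (2 : ℤ) ∣ M.mulVec ε j}

/-- The lattice points inside the half-open fundamental parallelotope
`{ Σ_i x_i f_i : 0 ≤ x_i < 1 }` of the columns `f_i` of `M`. -/
def parPoints {n : ℕ} (M : Matrix (Fin n) (Fin n) ℤ) : Set (Fin n → ℤ) :=
  {v | ∃ x : Fin n → ℝ, (∀ i, 0 ≤ x i ∧ x i < 1) ∧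
    ∀ j, (v j : ℝ) = ∑ i, x i * (M j i : ℝ)}

/-!
From `2ℤⁿ ⊆ Mℤⁿ` we get an integer matrix `B` with `M * B = 2 • 1`, so `det M ∣ 2ⁿ`; in
particular `M` is nonsingular, and `|det M| = [ℤⁿ : Mℤⁿ]` (Smith normal form) is a power of `2`.
Writing a lattice point as `v = M x` with real `x` and splitting `x = ⌊x⌋ + fract x` shows that
the lattice points of the half-open parallelotope form a system of representatives of `ℤⁿ / Mℤⁿ`.
For such a point, `2v = M c` with `c ∈ ℤⁿ`, and `c = 2x ∈ [0, 2)ⁿ` forces `c ∈ {0, 1}ⁿ`.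
-/

open Matrix

namespace Matrix

variable {ι : Type*} [Fintype ι]

theorem intCast_comp_mulVec (M : Matrix ι ι ℤ) (c : ι → ℤ) :
    (Int.cast ∘ (M *ᵥ c) : ι → ℝ) = M.map Int.cast *ᵥ (Int.cast ∘ c) :=
  funext (RingHom.map_mulVec (Int.castRingHom ℝ) M c)

variable [DecidableEq ι]

theorem exists_mul_eq_smul_one {R : Type*} [CommRing R] (M : Matrix ι ι R) (a : R)
    (h : ∀ v : ι → R, a • v ∈ LinearMap.range M.mulVecLin) :
    ∃ B : Matrix ι ι R, M * B = a • 1 := by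
  choose c hc using fun j => h (Pi.single j 1)
  refine ⟨(of c)ᵀ, ?_⟩
  ext i j
  have := congrFun (hc j) i
  simp only [mulVecLin_apply] at this
  simpa [mul_apply, mulVec, dotProduct, Pi.single_apply, one_apply, eq_comm] using this

theorem det_dvd_pow_of_smul_mem_range {R : Type*} [CommRing R] (M : Matrix ι ι R) (a : R)
    (h : ∀ v : ι → R, a • v ∈ LinearMap.range M.mulVecLin) :
    M.det ∣ a ^ Fintype.card ι := by
  obtain ⟨B, hB⟩ := M.exists_mul_eq_smul_one a h
  exact ⟨B.det, by rw [← det_mul, hB, det_smul, det_one, mul_one]⟩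

theorem natCard_quotient_range_mulVecLin (M : Matrix ι ι ℤ) (hM : M.det ≠ 0) :
    Nat.card ((ι → ℤ) ⧸ LinearMap.range M.mulVecLin) = M.det.natAbs := by
  rw [← Submodule.natAbs_det_equiv _
    (LinearEquiv.ofInjective M.mulVecLin (mulVec_injective_of_det_ne_zero hM)),
    ← LinearMap.det_toLin' M]
  rfl

theorem isUnit_map_intCast {M : Matrix ι ι ℤ} (hM : M.det ≠ 0) :
    IsUnit (M.map (Int.cast : ℤ → ℝ)) := by
  rw [isUnit_iff_isUnit_det, ← Int.cast_det, isUnit_iff_ne_zero]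
  exact_mod_cast hM

theorem eq_intCast_of_map_mulVec_eq {M : Matrix ι ι ℤ} (hM : M.det ≠ 0) {x : ι → ℝ}
    {c : ι → ℤ} (h : M.map Int.cast *ᵥ x = Int.cast ∘ (M *ᵥ c)) : x = Int.cast ∘ c :=
  mulVec_injective_iff_isUnit.2 (isUnit_map_intCast hM) (h.trans (M.intCast_comp_mulVec c))

end Matrix

section Parallelotope

variable {n : ℕ} (M : Matrix (Fin n) (Fin n) ℤ)

theorem mem_parPoints_iff {v : Fin n → ℤ} :
    v ∈ parPoints M ↔
      ∃ x : Fin n → ℝ, (∀ i, x i ∈ Set.Ico 0 1) ∧ M.map Int.cast *ᵥ x = Int.cast ∘ v := by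
  simp [parPoints, funext_iff, mulVec, dotProduct, mul_comm, eq_comm]

theorem eq_of_mem_parPoints_of_sub_mem_range (hM : M.det ≠ 0) {v w : Fin n → ℤ}
    (hv : v ∈ parPoints M) (hw : w ∈ parPoints M)
    (hvw : v - w ∈ LinearMap.range M.mulVecLin) : v = w := by
  obtain ⟨x, hx, hxv⟩ := (mem_parPoints_iff M).1 hv
  obtain ⟨y, hy, hyw⟩ := (mem_parPoints_iff M).1 hw
  obtain ⟨c, hc⟩ := hvw
  have hxy : x - y = Int.cast ∘ c := by
    refine eq_intCast_of_map_mulVec_eq hM ?_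
    rw [mulVec_sub, hxv, hyw, ← mulVecLin_apply, hc]
    ext; simp
  have hc0 : c = 0 := funext fun i => Int.abs_lt_one_iff.1 <| by
    have hi : (c i : ℝ) = x i - y i := (congrFun hxy i).symm
    exact_mod_cast hi ▸ abs_sub_lt_of_nonneg_of_lt (hx i).1 (hx i).2 (hy i).1 (hy i).2
  rw [hc0, map_zero] at hc
  exact sub_eq_zero.1 hc.symm

theorem exists_mem_parPoints_sub_mem_range (hM : M.det ≠ 0) (u : Fin n → ℤ) :
    ∃ v ∈ parPoints M, v - u ∈ LinearMap.range M.mulVecLin := by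
  obtain ⟨y, hy⟩ := mulVec_surjective_iff_isUnit.2 (isUnit_map_intCast hM) (Int.cast ∘ u)
  set c : Fin n → ℤ := fun i => ⌊y i⌋
  refine ⟨u - M *ᵥ c, (mem_parPoints_iff M).2 ⟨fun i => Int.fract (y i), ?_, ?_⟩, -c, ?_⟩
  · exact fun i => ⟨Int.fract_nonneg _, Int.fract_lt_one _⟩
  · have : (fun i => Int.fract (y i)) = y - Int.cast ∘ c := funext fun i => rfl
    rw [this, mulVec_sub, hy, ← M.intCast_comp_mulVec]
    ext; simp
  · simp [mulVec_neg]

theorem natCard_parPoints (hM : M.det ≠ 0) :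
    Nat.card (parPoints M) = Nat.card ((Fin n → ℤ) ⧸ LinearMap.range M.mulVecLin) := by
  refine Nat.card_congr (Equiv.ofBijective (fun v => Submodule.Quotient.mk v.1) ⟨?_, ?_⟩)
  · rintro ⟨v, hv⟩ ⟨w, hw⟩ h
    exact Subtype.ext <|
      eq_of_mem_parPoints_of_sub_mem_range M hM hv hw ((Submodule.Quotient.eq _).1 h)
  · rintro ⟨u⟩
    obtain ⟨v, hv, hvu⟩ := exists_mem_parPoints_sub_mem_range M hM u
    exact ⟨⟨v, hv⟩, (Submodule.Quotient.eq _).2 hvu⟩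

theorem parPoints_eq_of_two_smul_mem_range (hM : M.det ≠ 0)
    (hN : ∀ v : Fin n → ℤ, (2 : ℤ) • v ∈ LinearMap.range M.mulVecLin) :
    parPoints M = {v | ∃ ε ∈ Eset M, ∀ j, 2 * v j = (M *ᵥ ε) j} := by
  ext v
  rw [mem_parPoints_iff]
  constructor
  · rintro ⟨x, hx, hxv⟩
    obtain ⟨c, hc⟩ := hN v
    rw [mulVecLin_apply] at hc
    have hcx : (2 : ℝ) • x = Int.cast ∘ c := by
      refine eq_intCast_of_map_mulVec_eq hM ?_
      rw [mulVec_smul, hxv, hc]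
      ext; simp
    have hc01 : ∀ i, c i = 0 ∨ c i = 1 := by
      intro i
      have hi : (c i : ℝ) = 2 * x i := (congrFun hcx i).symm
      have h0 : (0 : ℤ) ≤ c i := by exact_mod_cast hi ▸ (by linarith [(hx i).1] : 0 ≤ 2 * x i)
      have h2 : c i < 2 := by exact_mod_cast hi ▸ (by linarith [(hx i).2] : 2 * x i < 2)
      omega
    refine ⟨c, ⟨hc01, fun j => ⟨v j, by simp [hc]⟩⟩, fun j => by simp [hc]⟩
  · rintro ⟨ε, ⟨hε, -⟩, hεv⟩
    refine ⟨(1 / 2 : ℝ) • (Int.cast ∘ ε), fun i => ?_, ?_⟩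
    · rcases hε i with h | h <;> norm_num [h]
    · rw [mulVec_smul, ← M.intCast_comp_mulVec]
      ext j
      simp [← hεv j]

end Parallelotope

theorem stmt13_general {n : ℕ} (M : Matrix (Fin n) (Fin n) ℤ)
    (hN : ∀ v : Fin n → ℤ, (2 : ℤ) • v ∈ LinearMap.range M.mulVecLin) :
    parPoints M = {v | ∃ ε ∈ Eset M, ∀ j, 2 * v j = M.mulVec ε j} ∧
      Nat.card (parPoints M) = M.det.natAbs ∧
      (∃ k₀ : ℕ, M.det.natAbs = 2 ^ k₀ ∧
        Nat.card ((Fin n → ℤ) ⧸ LinearMap.range M.mulVecLin) = 2 ^ k₀) := by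
  have hdvd : M.det ∣ 2 ^ n := by simpa using M.det_dvd_pow_of_smul_mem_range 2 hN
  have hM : M.det ≠ 0 := fun h => by simp [h] at hdvd
  obtain ⟨k₀, -, hk₀⟩ : ∃ k ≤ n, M.det.natAbs = 2 ^ k :=
    (Nat.dvd_prime_pow Nat.prime_two).1 (by simpa using Int.natAbs_dvd_natAbs.2 hdvd)
  have hcard := M.natCard_quotient_range_mulVecLin hM
  exact ⟨parPoints_eq_of_two_smul_mem_range M hM hN, (natCard_parPoints M hM).trans hcard, k₀, hk₀, hcard.trans hk₀⟩

theorem stmt13 {n : ℕ} (M : Matrix (Fin n) (Fin n) ℤ)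
    (hbasis : LinearIndependent ℤ (fun i : Fin n => fun j : Fin n => M j i))
    (hN : ∀ v : Fin n → ℤ, (2 : ℤ) • v ∈ LinearMap.range M.mulVecLin) :
    parPoints M = {v | ∃ ε ∈ Eset M, ∀ j, 2 * v j = M.mulVec ε j} ∧
      Nat.card (parPoints M) = M.det.natAbs ∧
      (∃ k₀ : ℕ, M.det.natAbs = 2 ^ k₀ ∧
        Nat.card ((Fin n → ℤ) ⧸ LinearMap.range M.mulVecLin) = 2 ^ k₀) :=
  stmt13_general M hN
end

section
/- Let q be an odd prime power, k = 𝔽_q, M ∈ M_n(ℤ) with 2ℤ^n ⊆ Mℤ^n, and E ⊆ {0,1}^n the lift of the kernel of M mod 2 on 𝔽₂^n. Let χ₂ be the quadratic character of k^× and for ε ∈ {0,1}^n let χ₂^ε(x₁,…,x_n) = ∏_i χ₂(x_i)^{ε_i}. Then the annihilator of the image of φ_M : (k^×)^n → (k^×)^n (x ↦ ^M x) in the character group of (k^×)^n is exactly { χ₂^ε : ε ∈ E }. -/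
open scoped BigOperators

/-- The group homomorphism `φ_M : (k^×)^n → (k^×)^n` sending `x` to the tuple whose
`i`-th entry is `∏_j x_j ^ m_{ji}`. -/
noncomputable def phiM {k : Type*} [Field k] {n : ℕ} (M : Matrix (Fin n) (Fin n) ℤ) :
    (Fin n → kˣ) →* (Fin n → kˣ) where
  toFun x := fun i => ∏ j, x j ^ M j i
  map_one' := by
    funext i
    simp
  map_mul' x y := by
    funext i
    simp [Pi.mul_apply, mul_zpow, Finset.prod_mul_distrib]

/-- The multiplicative character `χ₂^ε` of `(k^×)^n`,
`χ₂^ε (x₁, …, x_n) = ∏_i χ₂(x_i)^{ε_i}`. -/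
noncomputable def chiE {k : Type*} [Field k] {n : ℕ} (χ₂ : kˣ →* ℂˣ) (ε : Fin n → ℤ) :
    (Fin n → kˣ) →* ℂˣ where
  toFun x := ∏ i, χ₂ (x i) ^ ε i
  map_one' := by simp
  map_mul' x y := by
    simp [Pi.mul_apply, mul_zpow, Finset.prod_mul_distrib]

private lemma zpow_finset_sum {G : Type*} [CommGroup G] (a : G) {ι : Type*} (s : Finset ι)
    (f : ι → ℤ) : a ^ (∑ i ∈ s, f i) = ∏ i ∈ s, a ^ f i := by
  induction s using Finset.cons_induction with
  | empty => simp
  | cons i s hi ih => rw [Finset.sum_cons, Finset.prod_cons, zpow_add, ih]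

private lemma units_mul_self_eq_one {u : ℂˣ} (h : u * u = 1) : u = 1 ∨ u = -1 := by
  have h' : (u : ℂ) * u = 1 := by rw [← Units.val_mul, h, Units.val_one]
  rcases mul_self_eq_one_iff.mp h' with h1 | h1
  · left; exact Units.ext h1
  · right; exact Units.ext (by simpa using h1)

private lemma neg_one_zpow_eq_one_iff {m : ℤ} : ((-1 : ℂˣ) ^ m = 1) ↔ (2 : ℤ) ∣ m := by
  rw [Units.ext_iff, ← even_iff_two_dvd]
  push_cast
  rcases Int.even_or_odd m with he | ho
  · simp [he.neg_one_zpow, he]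
  · simp [ho.neg_one_zpow, Int.not_even_iff_odd.mpr ho]
    norm_num

section aux

variable {k : Type*} [Field k] {n : ℕ}

private lemma chi_decomp (χ : (Fin n → kˣ) →* ℂˣ) (x : Fin n → kˣ) :
    χ x = ∏ i, χ (Pi.mulSingle i (x i)) := by
  conv_lhs => rw [← Finset.univ_prod_mulSingle x]
  rw [map_prod]

private lemma phiM_mulSingle (M : Matrix (Fin n) (Fin n) ℤ) (j : Fin n) (t : kˣ) :
    phiM M (Pi.mulSingle j t) = fun i => t ^ M j i := by
  funext i
  show ∏ j', (Pi.mulSingle j t : Fin n → kˣ) j' ^ M j' i = t ^ M j i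
  rw [Fintype.prod_eq_single j]
  · simp
  · intro j' hj'
    simp [Pi.mulSingle_eq_of_ne hj']

private lemma hom_ext_of_gen {g : kˣ} (hg : ∀ x : kˣ, x ∈ Subgroup.zpowers g)
    (φ ψ : kˣ →* ℂˣ) (h : φ g = ψ g) : φ = ψ := by
  ext t
  obtain ⟨m, rfl⟩ := hg t
  rw [map_zpow, map_zpow, h]

end aux

theorem stmt14 {k : Type*} [Field k] [Fintype k] (q : ℕ) (hq : Fintype.card k = q)
    (hodd : Odd q) {n : ℕ} (M : Matrix (Fin n) (Fin n) ℤ)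
    (hN : ∀ v : Fin n → ℤ, (2 : ℤ) • v ∈ LinearMap.range M.mulVecLin)
    (χ₂ : kˣ →* ℂˣ) (hχ₂ : orderOf χ₂ = 2) :
    {χ : (Fin n → kˣ) →* ℂˣ | ∀ x, χ (phiM M x) = 1} =
      (fun ε => chiE χ₂ ε) '' Eset M := by
  classical
  -- χ₂ squared is trivial
  have hχ₂sq : ∀ t : kˣ, χ₂ t ^ (2 : ℕ) = 1 := by
    intro t
    have h1 : χ₂ ^ 2 = 1 := by rw [← hχ₂]; exact pow_orderOf_eq_one χ₂
    have := congrFun (congrArg (fun f : kˣ →* ℂˣ => (f : kˣ → ℂˣ)) h1) t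
    simpa using this
  -- a generator of kˣ
  obtain ⟨g, hg⟩ := IsCyclic.exists_generator (α := kˣ)
  have hχ₂g : χ₂ g = -1 := by
    have hsq : χ₂ g * χ₂ g = 1 := by
      have := hχ₂sq g; rwa [pow_two] at this
    rcases units_mul_self_eq_one hsq with h1 | h2
    · exfalso
      have : χ₂ = 1 := hom_ext_of_gen hg χ₂ 1 (by simpa using h1)
      rw [this, orderOf_one] at hχ₂
      norm_num at hχ₂
    · exact h2
  ext χ
  simp only [Set.mem_setOf_eq, Set.mem_image]
  constructor
  · -- forward direction
    intro hχ
    set c : Fin n → (kˣ →* ℂˣ) :=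
      fun i => χ.comp (MonoidHom.mulSingle (fun _ : Fin n => kˣ) i) with hc
    have hrel : ∀ (j : Fin n) (t : kˣ), ∏ i, c i t ^ M j i = 1 := by
      intro j t
      have h1 := hχ (Pi.mulSingle j t)
      rw [phiM_mulSingle, chi_decomp] at h1
      rw [← h1]
      refine Finset.prod_congr rfl fun i _ => ?_
      show χ (Pi.mulSingle i t) ^ M j i = χ (Pi.mulSingle i (t ^ M j i))
      rw [Pi.mulSingle_zpow, map_zpow]
    -- construct the quasi-inverse matrix N
    choose w hw using hN
    set N : Matrix (Fin n) (Fin n) ℤ := Matrix.of fun l j => w (Pi.single j 1) l with hNdef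
    have hMN : M * N = (2 : ℤ) • 1 := by
      ext i j
      have := congrFun (hw (Pi.single j 1)) i
      simp only [Matrix.mulVecLin_apply] at this
      simp only [Matrix.mul_apply, Matrix.smul_apply, Matrix.one_apply, hNdef, Matrix.of_apply]
      rw [show ∑ l, M i l * w (Pi.single j 1) l = M.mulVec (w (Pi.single j 1)) i from rfl, this]
      by_cases hij : i = j <;> simp [hij, Pi.single_apply]
    have hNM : N * M = (2 : ℤ) • 1 := by
      have hcast : (M.map (Int.castRingHom ℚ)) * (N.map (Int.castRingHom ℚ)) = (2 : ℚ) • 1 := by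
        rw [← Matrix.map_mul, hMN]
        ext i j
        simp only [Matrix.map_apply, Matrix.smul_apply, Matrix.one_apply, smul_eq_mul,
          mul_ite, mul_one, mul_zero]
        split_ifs <;> norm_num
      have hAB : (M.map (Int.castRingHom ℚ)) * ((2 : ℚ)⁻¹ • N.map (Int.castRingHom ℚ)) = 1 := by
        rw [Matrix.mul_smul, hcast, smul_smul]
        norm_num
      have hBA := mul_eq_one_comm.mp hAB
      have hNMq : (N.map (Int.castRingHom ℚ)) * (M.map (Int.castRingHom ℚ)) = (2 : ℚ) • 1 := by
        rw [Matrix.smul_mul] at hBA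
        calc (N.map (Int.castRingHom ℚ)) * (M.map (Int.castRingHom ℚ))
            = (2 : ℚ) • ((2 : ℚ)⁻¹ • ((N.map (Int.castRingHom ℚ)) * (M.map (Int.castRingHom ℚ)))) := by
              rw [smul_smul]; norm_num
          _ = (2 : ℚ) • 1 := by rw [hBA]
      ext i j
      have h1 : ((N * M).map (Int.castRingHom ℚ)) i j = ((2 : ℚ) • 1 : Matrix (Fin n) (Fin n) ℚ) i j := by
        rw [Matrix.map_mul, hNMq]
      simp only [Matrix.map_apply, Matrix.smul_apply, Matrix.one_apply, smul_eq_mul] at h1 ⊢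
      by_cases hij : i = j <;> simp [hij] at h1 ⊢ <;> exact_mod_cast h1
    -- each c i has square one
    have hcsq : ∀ (i : Fin n) (t : kˣ), c i t * c i t = 1 := by
      intro i t
      have key : ∏ i', c i' t ^ (N * M) i i' = 1 := by
        calc ∏ i', c i' t ^ (N * M) i i'
            = ∏ i', c i' t ^ (∑ l, N i l * M l i') := by
              refine Finset.prod_congr rfl fun i' _ => ?_
              rw [Matrix.mul_apply]
          _ = ∏ i', ∏ l, (c i' t ^ M l i') ^ N i l := by
              refine Finset.prod_congr rfl fun i' _ => ?_
              rw [zpow_finset_sum]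
              refine Finset.prod_congr rfl fun l _ => ?_
              rw [← zpow_mul, mul_comm]
          _ = ∏ l, (∏ i', c i' t ^ M l i') ^ N i l := by
              rw [Finset.prod_comm]
              exact Finset.prod_congr rfl fun l _ => Finset.prod_zpow _ _ _
          _ = 1 := by
              refine Finset.prod_eq_one fun l _ => ?_
              rw [hrel l t, one_zpow]
      rw [Fintype.prod_eq_single i (fun i' hi' => by
        simp [hNM, Matrix.smul_apply, Matrix.one_apply, Ne.symm hi'])] at key
      have : (N * M) i i = 2 := by simp [hNM]
      rw [this] at key
      rw [show ((2:ℤ)) = ((2:ℕ) : ℤ) by norm_num, zpow_natCast, pow_two] at key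
      exact key
    -- values at the generator
    have hcg : ∀ i : Fin n, c i g = 1 ∨ c i g = -1 := fun i => units_mul_self_eq_one (hcsq i g)
    set ε : Fin n → ℤ := fun i => if c i g = 1 then 0 else 1 with hε
    have hcgε : ∀ i : Fin n, c i g = (-1 : ℂˣ) ^ ε i := by
      intro i
      rcases hcg i with h | h <;> simp [hε, h]
    refine ⟨ε, ⟨fun i => ?_, fun j => ?_⟩, ?_⟩
    · by_cases h : c i g = 1 <;> simp [hε, h]
    · -- divisibility
      have h1 := hrel j g
      have h2 : ((-1 : ℂˣ)) ^ (M.mulVec ε j) = 1 := by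
        have hmv : M.mulVec ε j = ∑ i, M j i * ε i := rfl
        rw [hmv, zpow_finset_sum]
        have hcongr : ∀ i ∈ Finset.univ, ((-1 : ℂˣ)) ^ (M j i * ε i) = c i g ^ M j i :=
          fun i _ => by rw [hcgε i, ← zpow_mul, mul_comm]
        rw [Finset.prod_congr rfl hcongr, h1]
      exact neg_one_zpow_eq_one_iff.mp h2
    · -- χ = chiE χ₂ ε
      refine MonoidHom.ext fun x => ?_
      rw [chi_decomp χ x]
      show ∏ i, χ₂ (x i) ^ ε i = ∏ i, c i (x i)
      refine Finset.prod_congr rfl fun i _ => ?_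
      show χ₂ (x i) ^ (if c i g = 1 then (0:ℤ) else 1) = c i (x i)
      by_cases h : c i g = 1
      · have hci : c i = 1 := hom_ext_of_gen hg (c i) 1 (by simpa using h)
        rw [if_pos h, zpow_zero, hci, MonoidHom.one_apply]
      · have hne : c i g = -1 := (hcg i).resolve_left h
        have hci : c i = χ₂ := hom_ext_of_gen hg (c i) χ₂ (by rw [hne, hχ₂g])
        rw [if_neg h, zpow_one, hci]
  · -- reverse direction
    rintro ⟨ε, ⟨hε01, hεdvd⟩, rfl⟩
    intro x
    show ∏ i, χ₂ ((phiM M x) i) ^ ε i = 1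
    have step : ∀ i : Fin n, χ₂ ((phiM M x) i) ^ ε i = ∏ j, χ₂ (x j) ^ (M j i * ε i) := by
      intro i
      show χ₂ (∏ j, x j ^ M j i) ^ ε i = _
      rw [map_prod, ← Finset.prod_zpow]
      refine Finset.prod_congr rfl fun j _ => ?_
      rw [map_zpow, ← zpow_mul]
    calc ∏ i, χ₂ ((phiM M x) i) ^ ε i
        = ∏ i, ∏ j, χ₂ (x j) ^ (M j i * ε i) := Finset.prod_congr rfl fun i _ => step i
      _ = ∏ j, χ₂ (x j) ^ (∑ i, M j i * ε i) := by
          rw [Finset.prod_comm]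
          exact Finset.prod_congr rfl fun j _ => (zpow_finset_sum _ _ _).symm
      _ = 1 := by
          refine Finset.prod_eq_one fun j _ => ?_
          obtain ⟨d, hd⟩ := hεdvd j
          have hmv : M.mulVec ε j = ∑ i, M j i * ε i := rfl
          rw [← hmv, hd, zpow_mul]
          rw [show ((2:ℤ)) = ((2:ℕ):ℤ) by norm_num, zpow_natCast, hχ₂sq, one_zpow]
end
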